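/- Main theorem: the positive modal language L⁺_{□,◇,∧,∨} is finitely characterizable: for every finite set Prop of propositional variables, every formula φ ∈ L⁺_{□,◇,∧,∨}[Prop] has a finite characterization with respect to L⁺_{□,◇,∧,∨}[Prop]. -/

import Mathlib

/-- Modal formulas in negation normal form over propositional variables indexed by `ℕ`.
`var p` is the propositional variable `p`; `nvar p` is the negated literal `¬ p`. -/
inductive MF : Type
  | var  : ℕ → MF
  | nvar : ℕ → MF
  | top  : MF
  | bot  : MF
  | and  : MF → MF → MF
  | or   : MF → MF → MF
  | dia  : MF → MF
  | box  : MF → MF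

/-- Labels for the connectives `∧, ∨, ◇, □, ⊤, ⊥`. -/
inductive Conn : Type
  | conj | disj | dia | box | top | bot

/-- The set of connectives occurring in a modal formula. -/
def MF.conns : MF → Set Conn
  | .var _ => ∅
  | .nvar _ => ∅
  | .top => {Conn.top}
  | .bot => {Conn.bot}
  | .and φ ψ => φ.conns ∪ ψ.conns ∪ {Conn.conj}
  | .or φ ψ => φ.conns ∪ ψ.conns ∪ {Conn.disj}
  | .dia φ => φ.conns ∪ {Conn.dia}
  | .box φ => φ.conns ∪ {Conn.box}

/-- The set of propositional variables occurring positively (unnegated) in a formula. -/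
def MF.pvars : MF → Set ℕ
  | .var p => {p}
  | .nvar _ => ∅
  | .top => ∅
  | .bot => ∅
  | .and φ ψ => φ.pvars ∪ ψ.pvars
  | .or φ ψ => φ.pvars ∪ ψ.pvars
  | .dia φ => φ.pvars
  | .box φ => φ.pvars

/-- The set of propositional variables occurring negatively (negated) in a formula. -/
def MF.nvars : MF → Set ℕ
  | .var _ => ∅
  | .nvar p => {p}
  | .top => ∅
  | .bot => ∅
  | .and φ ψ => φ.nvars ∪ ψ.nvars
  | .or φ ψ => φ.nvars ∪ ψ.nvars
  | .dia φ => φ.nvars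
  | .box φ => φ.nvars

/-- The set of propositional variables occurring in a formula. -/
def MF.vars (φ : MF) : Set ℕ := φ.pvars ∪ φ.nvars

/-- `φ ∈ L_C[P]`: the formula `φ` (in negation normal form, built from literals) uses only
connectives from `C` and variables from `P`. -/
def inLang (C : Set Conn) (P : Set ℕ) (φ : MF) : Prop := φ.conns ⊆ C ∧ φ.vars ⊆ P

/-- A formula is positive if no propositional variable occurs negated in it. -/
def Positive (φ : MF) : Prop := φ.nvars = ∅

/-- A formula is negative if every propositional variable occurs only negated in it. -/
def Negative (φ : MF) : Prop := φ.pvars = ∅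

/-- `φ ∈ L⁺_C[P]`: positive fragment. -/
def inPosLang (C : Set Conn) (P : Set ℕ) (φ : MF) : Prop := inLang C P φ ∧ Positive φ

/-- `φ ∈ L⁻_C[P]`: negative fragment. -/
def inNegLang (C : Set Conn) (P : Set ℕ) (φ : MF) : Prop := inLang C P φ ∧ Negative φ

/-- A Kripke model: a set of worlds, an accessibility relation, and a valuation. -/
structure KModel : Type 1 where
  W : Type
  R : W → W → Prop
  V : ℕ → Set W

/-- A pointed Kripke model. -/
structure PModel : Type 1 where
  M : KModel
  s : M.W

/-- Satisfaction of a modal formula at a world of a Kripke model. -/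
def KModel.sat (M : KModel) : M.W → MF → Prop
  | s, .var p => s ∈ M.V p
  | s, .nvar p => s ∉ M.V p
  | _, .top => True
  | _, .bot => False
  | s, .and φ ψ => M.sat s φ ∧ M.sat s ψ
  | s, .or φ ψ => M.sat s φ ∨ M.sat s ψ
  | s, .dia φ => ∃ t, M.R s t ∧ M.sat t φ
  | s, .box φ => ∀ t, M.R s t → M.sat t φ

/-- Satisfaction in a pointed model. -/
def PModel.sat (e : PModel) (φ : MF) : Prop := e.M.sat e.s φ

/-- A pointed model is finite if its set of worlds is finite. -/
def PModel.finite (e : PModel) : Prop := Finite e.M.W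

/-- `φ` fits the pair of example sets `(Epos, Eneg)`. -/
def Fits (φ : MF) (Epos Eneg : Set PModel) : Prop :=
  (∀ e ∈ Epos, e.sat φ) ∧ (∀ e ∈ Eneg, ¬ e.sat φ)

/-- Semantic equivalence of modal formulas. -/
def EquivF (φ ψ : MF) : Prop := ∀ e : PModel, e.sat φ ↔ e.sat ψ

/-- Semantic entailment of modal formulas. -/
def Entails (φ ψ : MF) : Prop := ∀ e : PModel, e.sat φ → e.sat ψ

/-- `(Epos, Eneg)` is a finite characterization of `φ` with respect to the set `L` of
formulas: both sets are finite, consist of finite pointed models, `φ` fits them, and every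
`ψ ∈ L` fitting them is semantically equivalent to `φ`. -/
def FinChar (L : Set MF) (φ : MF) (Epos Eneg : Set PModel) : Prop :=
  Epos.Finite ∧ Eneg.Finite ∧
  (∀ e ∈ Epos, e.finite) ∧ (∀ e ∈ Eneg, e.finite) ∧
  Fits φ Epos Eneg ∧
  ∀ ψ ∈ L, Fits ψ Epos Eneg → EquivF φ ψ


/-! ### Auxiliary development -/

section Aux

open Classical

/-- The connective set `{□,◇,∧,∨}`. -/
def C4 : Set Conn := {Conn.box, Conn.dia, Conn.conj, Conn.disj}

/-- Membership in the positive `{□,◇,∧,∨}` fragment (over all variables). -/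
def Frag (χ : MF) : Prop := χ.conns ⊆ C4 ∧ χ.nvars = ∅

/-- De Morgan / complement dual of a formula. -/
def MF.flip : MF → MF
  | .var p => .var p
  | .nvar p => .nvar p
  | .top => .bot
  | .bot => .top
  | .and φ ψ => .or φ.flip ψ.flip
  | .or φ ψ => .and φ.flip ψ.flip
  | .dia φ => .box φ.flip
  | .box φ => .dia φ.flip

lemma MF.flip_flip (φ : MF) : φ.flip.flip = φ := by
  induction φ <;> simp [MF.flip, *]

lemma conns_flip {φ : MF} (h : φ.conns ⊆ C4) : φ.flip.conns ⊆ C4 := by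
  induction φ with
  | var p => simpa [MF.flip, MF.conns] using h
  | nvar p => simpa [MF.flip, MF.conns] using h
  | top => exfalso; have := h (show Conn.top ∈ MF.top.conns by simp [MF.conns]); simp [C4] at this
  | bot => exfalso; have := h (show Conn.bot ∈ MF.bot.conns by simp [MF.conns]); simp [C4] at this
  | and φ ψ ihφ ihψ =>
      simp only [MF.conns, MF.flip, Set.union_subset_iff] at h ⊢
      exact ⟨⟨ihφ h.1.1, ihψ h.1.2⟩, by intro x hx; simp at hx; subst hx; simp [C4]⟩
  | or φ ψ ihφ ihψ =>
      simp only [MF.conns, MF.flip, Set.union_subset_iff] at h ⊢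
      exact ⟨⟨ihφ h.1.1, ihψ h.1.2⟩, by intro x hx; simp at hx; subst hx; simp [C4]⟩
  | dia φ ihφ =>
      simp only [MF.conns, MF.flip, Set.union_subset_iff] at h ⊢
      exact ⟨ihφ h.1, by intro x hx; simp at hx; subst hx; simp [C4]⟩
  | box φ ihφ =>
      simp only [MF.conns, MF.flip, Set.union_subset_iff] at h ⊢
      exact ⟨ihφ h.1, by intro x hx; simp at hx; subst hx; simp [C4]⟩

lemma nvars_flip (φ : MF) : φ.flip.nvars = φ.nvars := by
  induction φ <;> simp [MF.flip, MF.nvars, *]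

lemma frag_flip {φ : MF} (h : Frag φ) : Frag φ.flip :=
  ⟨conns_flip h.1, by rw [nvars_flip]; exact h.2⟩

/-- Complement-valuation dual of a model. -/
def dualModel (M : KModel) : KModel := ⟨M.W, M.R, fun p => (M.V p)ᶜ⟩

lemma dual_sat (M : KModel) : ∀ (χ : MF) (s : M.W),
    (dualModel M).sat s χ ↔ ¬ M.sat s χ.flip := by
  intro χ
  induction χ with
  | var p => intro s; simp [KModel.sat, MF.flip, dualModel]; exact Iff.rfl
  | nvar p => intro s; simp [KModel.sat, MF.flip, dualModel]; exact not_not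
  | top => intro s; simp [KModel.sat, MF.flip]
  | bot => intro s; simp [KModel.sat, MF.flip]
  | and φ ψ ihφ ihψ => intro s; simp only [KModel.sat, MF.flip, ihφ, ihψ]; tauto
  | or φ ψ ihφ ihψ => intro s; simp only [KModel.sat, MF.flip, ihφ, ihψ]; tauto
  | dia φ ihφ =>
      intro s
      simp only [KModel.sat, MF.flip]
      constructor
      · rintro ⟨t, ht, hn⟩ hall; exact (ihφ t).1 hn (hall t ht)
      · intro h
        by_contra hc
        push_neg at hc
        apply h
        intro t ht
        by_contra hn
        exact hc t ht ((ihφ t).2 hn)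
  | box φ ihφ =>
      intro s
      simp only [KModel.sat, MF.flip]
      constructor
      · intro h hc; obtain ⟨t, ht, hsat⟩ := hc; exact (ihφ t).1 (h t ht) hsat
      · intro h t ht
        apply (ihφ t).2
        intro hsat
        exact h ⟨t, ht, hsat⟩

/-- A world satisfying no formula of the fragment. -/
def Dead (M : KModel) (u : M.W) : Prop := ∀ χ, Frag χ → ¬ M.sat u χ

lemma frag_and {φ ψ : MF} (h : Frag (φ.and ψ)) : Frag φ ∧ Frag ψ := by
  obtain ⟨h1, h2⟩ := h
  simp only [MF.conns, MF.nvars, Set.union_subset_iff, Set.union_empty_iff] at h1 h2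
  exact ⟨⟨h1.1.1, h2.1⟩, ⟨h1.1.2, h2.2⟩⟩

lemma frag_or {φ ψ : MF} (h : Frag (φ.or ψ)) : Frag φ ∧ Frag ψ := by
  obtain ⟨h1, h2⟩ := h
  simp only [MF.conns, MF.nvars, Set.union_subset_iff, Set.union_empty_iff] at h1 h2
  exact ⟨⟨h1.1.1, h2.1⟩, ⟨h1.1.2, h2.2⟩⟩

lemma frag_dia {φ : MF} (h : Frag (φ.dia)) : Frag φ := by
  obtain ⟨h1, h2⟩ := h
  simp only [MF.conns, MF.nvars, Set.union_subset_iff] at h1 h2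
  exact ⟨h1.1, h2⟩

lemma frag_box {φ : MF} (h : Frag (φ.box)) : Frag φ := by
  obtain ⟨h1, h2⟩ := h
  simp only [MF.conns, MF.nvars, Set.union_subset_iff] at h1 h2
  exact ⟨h1.1, h2⟩

lemma frag_var (p : ℕ) : Frag (MF.var p) := by
  constructor
  · simp [MF.conns]
  · simp [MF.nvars]

lemma frag_dia' {φ : MF} (h : Frag φ) : Frag φ.dia := by
  obtain ⟨h1, h2⟩ := h
  refine ⟨?_, h2⟩
  simp only [MF.conns, Set.union_subset_iff]
  exact ⟨h1, by intro x hx; simp at hx; subst hx; simp [C4]⟩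

lemma frag_box' {φ : MF} (h : Frag φ) : Frag φ.box := by
  obtain ⟨h1, h2⟩ := h
  refine ⟨?_, h2⟩
  simp only [MF.conns, Set.union_subset_iff]
  exact ⟨h1, by intro x hx; simp at hx; subst hx; simp [C4]⟩

lemma dead_succ {M : KModel} {u u' : M.W} (hd : Dead M u) (h : M.R u u') : Dead M u' := by
  intro χ hχ hsat
  exact hd χ.dia (frag_dia' hχ) ⟨u', h, hsat⟩

/-- Weak simulations: preserve positive `{□,◇,∧,∨}` formulas. -/
def WSim (M N : KModel) (Z : M.W → N.W → Prop) : Prop :=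
  ∀ u v, Z u v →
    (∀ p, u ∈ M.V p → v ∈ N.V p) ∧
    (∀ u', M.R u u' → (∃ v', N.R v v' ∧ Z u' v') ∨ Dead M u') ∧
    (∀ v', N.R v v' → (∃ u', M.R u u' ∧ Z u' v') ∨ Dead M u)

/-- Weak similarity. -/
def SimW (M N : KModel) (u : M.W) (v : N.W) : Prop := ∃ Z, WSim M N Z ∧ Z u v

lemma wsim_preserve {M N : KModel} {Z : M.W → N.W → Prop} (hZ : WSim M N Z) :
    ∀ (χ : MF), Frag χ → ∀ u v, Z u v → M.sat u χ → N.sat v χ := by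
  intro χ
  induction χ with
  | var p => intro h u v huv hs; exact (hZ u v huv).1 p hs
  | nvar p => intro h; exfalso; obtain ⟨-, h2⟩ := h; simp [MF.nvars] at h2
  | top => intro h; exfalso; have := h.1 (show Conn.top ∈ (MF.top).conns by simp [MF.conns]); simp [C4] at this
  | bot => intro h u v _ hs; exact absurd hs (by simp [KModel.sat])
  | and φ ψ ihφ ihψ =>
      intro h u v huv hs
      obtain ⟨hφ, hψ⟩ := frag_and h
      exact ⟨ihφ hφ u v huv hs.1, ihψ hψ u v huv hs.2⟩
  | or φ ψ ihφ ihψ =>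
      intro h u v huv hs
      obtain ⟨hφ, hψ⟩ := frag_or h
      rcases hs with hs | hs
      · exact Or.inl (ihφ hφ u v huv hs)
      · exact Or.inr (ihψ hψ u v huv hs)
  | dia φ ihφ =>
      intro h u v huv hs
      obtain ⟨u', hu', hsat⟩ := hs
      rcases (hZ u v huv).2.1 u' hu' with ⟨v', hv', hZ'⟩ | hdead
      · exact ⟨v', hv', ihφ (frag_dia h) u' v' hZ' hsat⟩
      · exact absurd hsat (hdead φ (frag_dia h))
  | box φ ihφ =>
      intro h u v huv hs v' hv'
      rcases (hZ u v huv).2.2 v' hv' with ⟨u', hu', hZ'⟩ | hdead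
      · exact ihφ (frag_box h) u' v' hZ' (hs u' hu')
      · exact absurd hs (hdead φ.box h)

lemma simW_preserve {M N : KModel} {u : M.W} {v : N.W} (h : SimW M N u v)
    {χ : MF} (hχ : Frag χ) (hs : M.sat u χ) : N.sat v χ := by
  obtain ⟨Z, hZ, huv⟩ := h
  exact wsim_preserve hZ χ hχ u v huv hs

lemma dead_simW {M N : KModel} {u : M.W} (hd : Dead M u) (v : N.W) : SimW M N u v := by
  refine ⟨fun x _ => Dead M x, ?_, hd⟩
  intro x y hx
  refine ⟨?_, ?_, ?_⟩
  · intro p hp; exact absurd hp (hx (.var p) (frag_var p))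
  · intro u' hu'; exact Or.inr (dead_succ hx hu')
  · intro v' _; exact Or.inr hx

lemma wsim_simW (M N : KModel) : WSim M N (SimW M N) := by
  intro u v huv
  obtain ⟨Z, hZ, hZuv⟩ := huv
  obtain ⟨h1, h2, h3⟩ := hZ u v hZuv
  refine ⟨h1, ?_, ?_⟩
  · intro u' hu'
    rcases h2 u' hu' with ⟨v', hv', hz⟩ | hd
    · exact Or.inl ⟨v', hv', ⟨Z, hZ, hz⟩⟩
    · exact Or.inr hd
  · intro v' hv'
    rcases h3 v' hv' with ⟨u', hu', hz⟩ | hd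
    · exact Or.inl ⟨u', hu', ⟨Z, hZ, hz⟩⟩
    · exact Or.inr hd

/-- Extend weak similarity by a new root pair. -/
lemma simW_head {M N : KModel} (A : M.W) (B : N.W)
    (hA : ∀ p, A ∈ M.V p → B ∈ N.V p)
    (hf : ∀ u', M.R A u' → (∃ v', N.R B v' ∧ SimW M N u' v') ∨ Dead M u')
    (hb : ∀ v', N.R B v' → (∃ u', M.R A u' ∧ SimW M N u' v') ∨ Dead M A) :
    SimW M N A B := by
  refine ⟨fun x y => SimW M N x y ∨ (x = A ∧ y = B), ?_, Or.inr ⟨rfl, rfl⟩⟩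
  intro u v huv
  rcases huv with hs | ⟨rfl, rfl⟩
  · obtain ⟨h1, h2, h3⟩ := wsim_simW M N u v hs
    refine ⟨h1, ?_, ?_⟩
    · intro u' hu'
      rcases h2 u' hu' with ⟨v', hv', hz⟩ | hd
      · exact Or.inl ⟨v', hv', Or.inl hz⟩
      · exact Or.inr hd
    · intro v' hv'
      rcases h3 v' hv' with ⟨u', hu', hz⟩ | hd
      · exact Or.inl ⟨u', hu', Or.inl hz⟩
      · exact Or.inr hd
  · refine ⟨hA, ?_, ?_⟩
    · intro u' hu'
      rcases hf u' hu' with ⟨v', hv', hz⟩ | hd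
      · exact Or.inl ⟨v', hv', Or.inl hz⟩
      · exact Or.inr hd
    · intro v' hv'
      rcases hb v' hv' with ⟨u', hu', hz⟩ | hd
      · exact Or.inl ⟨u', hu', Or.inl hz⟩
      · exact Or.inr hd

end Aux


/-! ### Normal forms -/

section NFsec

mutual
/-- Normal form: variables, diamond conjuncts, and (optionally) one box over a disjunction. -/
inductive NF : Type where
  | mk : List ℕ → NFs → Bool → NFs → NF
inductive NFs : Type where
  | nil : NFs
  | cons : NF → NFs → NFs
end

def NFs.toList : NFs → List NF
  | .nil => []
  | .cons a l => a :: l.toList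

def NFs.app : NFs → NFs → NFs
  | .nil, l => l
  | .cons a t, l => .cons a (t.app l)

lemma NFs.toList_app : ∀ (l l' : NFs), (l.app l').toList = l.toList ++ l'.toList
  | .nil, l' => by simp [NFs.app, NFs.toList]
  | .cons a t, l' => by simp [NFs.app, NFs.toList, NFs.toList_app t l']

def nfsOf : List NF → NFs
  | [] => .nil
  | a :: t => .cons a (nfsOf t)

lemma toList_nfsOf (l : List NF) : (nfsOf l).toList = l := by
  induction l with
  | nil => simp [nfsOf, NFs.toList]
  | cons a t ih => simp [nfsOf, NFs.toList, ih]

lemma sizeOf_mem : ∀ (l : NFs) (a : NF), a ∈ l.toList → sizeOf a < sizeOf l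
  | .nil, a, h => by simp [NFs.toList] at h
  | .cons b t, a, h => by
      simp [NFs.toList] at h
      rcases h with rfl | h
      · simp; omega
      · have := sizeOf_mem t a h; simp; omega

mutual
/-- Conjunction of normal forms. -/
def conj : NF → NF → NF
  | .mk v d b l, .mk v' d' b' l' =>
    .mk (v ++ v') (d.app d') (b || b')
      (match b, b' with
       | false, _ => l'
       | true, false => l
       | true, true => conjs l l')
  termination_by a b => sizeOf a + sizeOf b
  decreasing_by all_goals (simp_wf <;> omega)
def conjs : NFs → NFs → NFs
  | .nil, _ => .nil
  | .cons a t, l' => (conj1 a l').app (conjs t l')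
  termination_by l l' => sizeOf l + sizeOf l'
  decreasing_by all_goals (simp_wf <;> omega)
def conj1 : NF → NFs → NFs
  | _, .nil => .nil
  | a, .cons b t => .cons (conj a b) (conj1 a t)
  termination_by a l => sizeOf a + sizeOf l
  decreasing_by all_goals (simp_wf <;> omega)
end

mutual
def NF.depth : NF → ℕ
  | .mk _ d _ l => max (NFs.depthL d) (NFs.depthL l) + 1
def NFs.depthL : NFs → ℕ
  | .nil => 0
  | .cons a t => max a.depth t.depthL
end

lemma depthL_app : ∀ (l l' : NFs), (l.app l').depthL = max l.depthL l'.depthL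
  | .nil, l' => by simp [NFs.app, NFs.depthL]
  | .cons a t, l' => by simp [NFs.app, NFs.depthL, depthL_app t l']

lemma depth_mem : ∀ (l : NFs) (a : NF), a ∈ l.toList → a.depth ≤ l.depthL
  | .nil, a, h => by simp [NFs.toList] at h
  | .cons b t, a, h => by
      simp [NFs.toList] at h
      rcases h with rfl | h
      · simp [NFs.depthL]
      · have := depth_mem t a h; simp [NFs.depthL]; omega

lemma depth_pos (a : NF) : 1 ≤ a.depth := by
  obtain ⟨v, d, b, l⟩ := a; simp [NF.depth]

mutual
theorem depth_conj (a b : NF) : (conj a b).depth ≤ max a.depth b.depth := by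
  obtain ⟨v, d, bb, l⟩ := a
  obtain ⟨v', d', bb', l'⟩ := b
  cases bb <;> cases bb' <;>
    simp only [conj, NF.depth, depthL_app]
  · omega
  · omega
  · omega
  · have := depth_conjs l l'
    omega
  termination_by sizeOf a + sizeOf b
  decreasing_by all_goals (simp_wf <;> omega)
theorem depth_conjs (l l' : NFs) : (conjs l l').depthL ≤ max l.depthL l'.depthL := by
  cases l with
  | nil => simp [conjs, NFs.depthL]
  | cons a t =>
      have h1 := depth_conj1 a l'
      have h2 := depth_conjs t l'
      simp only [conjs, depthL_app, NFs.depthL]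
      omega
  termination_by sizeOf l + sizeOf l'
  decreasing_by all_goals (simp_wf <;> omega)
theorem depth_conj1 (a : NF) (l : NFs) : (conj1 a l).depthL ≤ max a.depth l.depthL := by
  cases l with
  | nil => simp [conj1, NFs.depthL]
  | cons b t =>
      have h1 := depth_conj a b
      have h2 := depth_conj1 a t
      simp only [conj1, NFs.depthL]
      omega
  termination_by sizeOf a + sizeOf l
  decreasing_by all_goals (simp_wf <;> omega)
end

mutual
/-- Satisfaction of normal forms. -/
def satNF (M : KModel) : M.W → NF → Prop
  | s, .mk v d b l =>
      (∀ p ∈ v, s ∈ M.V p) ∧ satD M s d ∧ (b = true → ∀ t, M.R s t → satSome M t l)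
  termination_by _ θ => sizeOf θ
  decreasing_by all_goals (simp_wf <;> omega)
def satD (M : KModel) : M.W → NFs → Prop
  | _, .nil => True
  | s, .cons a t => (∃ w, M.R s w ∧ satNF M w a) ∧ satD M s t
  termination_by _ l => sizeOf l
  decreasing_by all_goals (simp_wf <;> omega)
def satSome (M : KModel) : M.W → NFs → Prop
  | _, .nil => False
  | s, .cons a t => satNF M s a ∨ satSome M s t
  termination_by _ l => sizeOf l
  decreasing_by all_goals (simp_wf <;> omega)
end

lemma satD_iff (M : KModel) (s : M.W) : ∀ (d : NFs),
    satD M s d ↔ ∀ a ∈ d.toList, ∃ w, M.R s w ∧ satNF M w a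
  | .nil => by simp [satD, NFs.toList]
  | .cons a t => by simp [satD, NFs.toList, satD_iff M s t]

lemma satSome_iff (M : KModel) (s : M.W) : ∀ (l : NFs),
    satSome M s l ↔ ∃ a ∈ l.toList, satNF M s a
  | .nil => by simp [satSome, NFs.toList]
  | .cons a t => by simp [satSome, NFs.toList, satSome_iff M s t]

lemma toList_conj1 (a : NF) : ∀ (l : NFs), (conj1 a l).toList = l.toList.map (conj a)
  | .nil => by simp [conj1, NFs.toList]
  | .cons b t => by simp [conj1, NFs.toList, toList_conj1 a t]

lemma toList_conjs : ∀ (l l' : NFs),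
    (conjs l l').toList = l.toList.flatMap (fun a => l'.toList.map (conj a))
  | .nil, l' => by simp [conjs, NFs.toList]
  | .cons a t, l' => by
      simp [conjs, NFs.toList_app, NFs.toList, toList_conj1, toList_conjs t l']

theorem conj_sat (M : KModel) (a b : NF) :
    ∀ s, satNF M s (conj a b) ↔ (satNF M s a ∧ satNF M s b) := by
  obtain ⟨v, d, bb, l⟩ := a
  obtain ⟨v', d', bb', l'⟩ := b
  intro s
  have hbox : ∀ t : M.W, satSome M t (conjs l l') ↔ (satSome M t l ∧ satSome M t l') := by
    intro t
    rw [satSome_iff, satSome_iff, satSome_iff, toList_conjs]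
    simp only [List.mem_flatMap, List.mem_map]
    constructor
    · rintro ⟨c, ⟨a0, ha0, b0, hb0, rfl⟩, hc⟩
      rw [conj_sat M a0 b0 t] at hc
      exact ⟨⟨a0, ha0, hc.1⟩, ⟨b0, hb0, hc.2⟩⟩
    · rintro ⟨⟨a0, ha0, h1⟩, ⟨b0, hb0, h2⟩⟩
      exact ⟨conj a0 b0, ⟨a0, ha0, b0, hb0, rfl⟩, (conj_sat M a0 b0 t).2 ⟨h1, h2⟩⟩
  cases bb <;> cases bb' <;>
    simp only [conj, satNF, satD_iff, NFs.toList_app, List.mem_append, Bool.or_self,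
      Bool.or_true, Bool.true_or, Bool.or_false, Bool.false_or] <;>
    constructor
  · rintro ⟨h1, h2, _⟩
    exact ⟨⟨fun p hp => h1 p (Or.inl hp), fun c hc => h2 c (Or.inl hc), by simp⟩,
      ⟨fun p hp => h1 p (Or.inr hp), fun c hc => h2 c (Or.inr hc), by simp⟩⟩
  · rintro ⟨⟨h1, h2, _⟩, ⟨h1', h2', _⟩⟩
    refine ⟨fun p hp => hp.elim (h1 p) (h1' p), fun c hc => hc.elim (h2 c) (h2' c), by simp⟩
  · rintro ⟨h1, h2, h3⟩
    exact ⟨⟨fun p hp => h1 p (Or.inl hp), fun c hc => h2 c (Or.inl hc), by simp⟩,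
      ⟨fun p hp => h1 p (Or.inr hp), fun c hc => h2 c (Or.inr hc), fun _ => h3 (by trivial)⟩⟩
  · rintro ⟨⟨h1, h2, _⟩, ⟨h1', h2', h3'⟩⟩
    refine ⟨fun p hp => hp.elim (h1 p) (h1' p), fun c hc => hc.elim (h2 c) (h2' c), fun _ => h3' (by trivial)⟩
  · rintro ⟨h1, h2, h3⟩
    exact ⟨⟨fun p hp => h1 p (Or.inl hp), fun c hc => h2 c (Or.inl hc), fun _ => h3 (by trivial)⟩,
      ⟨fun p hp => h1 p (Or.inr hp), fun c hc => h2 c (Or.inr hc), by simp⟩⟩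
  · rintro ⟨⟨h1, h2, h3⟩, ⟨h1', h2', _⟩⟩
    refine ⟨fun p hp => hp.elim (h1 p) (h1' p), fun c hc => hc.elim (h2 c) (h2' c), fun _ => h3 (by trivial)⟩
  · rintro ⟨h1, h2, h3⟩
    refine ⟨⟨fun p hp => h1 p (Or.inl hp), fun c hc => h2 c (Or.inl hc),
        fun _ t ht => ((hbox t).1 (h3 (by trivial) t ht)).1⟩,
      ⟨fun p hp => h1 p (Or.inr hp), fun c hc => h2 c (Or.inr hc),
        fun _ t ht => ((hbox t).1 (h3 (by trivial) t ht)).2⟩⟩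
  · rintro ⟨⟨h1, h2, h3⟩, ⟨h1', h2', h3'⟩⟩
    refine ⟨fun p hp => hp.elim (h1 p) (h1' p), fun c hc => hc.elim (h2 c) (h2' c),
      fun _ t ht => (hbox t).2 ⟨h3 (by trivial) t ht, h3' (by trivial) t ht⟩⟩
termination_by sizeOf a + sizeOf b
decreasing_by
  all_goals
    (have := sizeOf_mem _ _ ha0; have := sizeOf_mem _ _ hb0; simp_wf <;> omega)

/-- Conversion of a positive formula into a disjunction of normal forms. -/
def toNF : MF → List NF
  | .var p => [.mk [p] .nil false .nil]
  | .nvar _ => []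
  | .top => []
  | .bot => []
  | .and φ ψ => (toNF φ).flatMap (fun a => (toNF ψ).map (fun b => conj a b))
  | .or φ ψ => toNF φ ++ toNF ψ
  | .dia φ => (toNF φ).map (fun a => .mk [] (.cons a .nil) false .nil)
  | .box φ => [.mk [] .nil true (nfsOf (toNF φ))]

theorem toNF_sound (φ : MF) (hφ : Frag φ) (M : KModel) :
    ∀ s, M.sat s φ ↔ ∃ θ ∈ toNF φ, satNF M s θ := by
  induction φ with
  | var p => intro s; simp [toNF, satNF, satD, KModel.sat]
  | nvar p => exact absurd hφ.2 (by simp [MF.nvars])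
  | top =>
      exfalso
      have := hφ.1 (show Conn.top ∈ (MF.top).conns by simp [MF.conns])
      simp [C4] at this
  | bot => intro s; simp [toNF, KModel.sat]
  | and φ ψ ihφ ihψ =>
      intro s
      obtain ⟨h1, h2⟩ := frag_and hφ
      simp only [KModel.sat, toNF, List.mem_flatMap, List.mem_map, ihφ h1, ihψ h2]
      constructor
      · rintro ⟨⟨a, ha, hsa⟩, ⟨b, hb, hsb⟩⟩
        exact ⟨conj a b, ⟨a, ha, b, hb, rfl⟩, (conj_sat M a b s).2 ⟨hsa, hsb⟩⟩
      · rintro ⟨c, ⟨a, ha, b, hb, rfl⟩, hc⟩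
        obtain ⟨hsa, hsb⟩ := (conj_sat M a b s).1 hc
        exact ⟨⟨a, ha, hsa⟩, ⟨b, hb, hsb⟩⟩
  | or φ ψ ihφ ihψ =>
      intro s
      obtain ⟨h1, h2⟩ := frag_or hφ
      simp only [KModel.sat, toNF, List.mem_append, ihφ h1, ihψ h2]
      constructor
      · rintro (⟨θ, hθ, hs⟩ | ⟨θ, hθ, hs⟩)
        · exact ⟨θ, Or.inl hθ, hs⟩
        · exact ⟨θ, Or.inr hθ, hs⟩
      · rintro ⟨θ, hθ | hθ, hs⟩
        · exact Or.inl ⟨θ, hθ, hs⟩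
        · exact Or.inr ⟨θ, hθ, hs⟩
  | dia φ ihφ =>
      intro s
      have h1 := frag_dia hφ
      simp only [KModel.sat, toNF, List.mem_map]
      constructor
      · rintro ⟨t, ht, hs⟩
        obtain ⟨θ, hθ, hsθ⟩ := ((ihφ h1) t).1 hs
        refine ⟨_, ⟨θ, hθ, rfl⟩, ?_⟩
        simp only [satNF, satD]
        exact ⟨by simp, ⟨⟨t, ht, hsθ⟩, trivial⟩, by simp⟩
      · rintro ⟨c, ⟨θ, hθ, rfl⟩, hc⟩
        simp only [satNF, satD] at hc
        obtain ⟨-, ⟨⟨t, ht, hsθ⟩, -⟩, -⟩ := hc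
        exact ⟨t, ht, ((ihφ h1) t).2 ⟨θ, hθ, hsθ⟩⟩
  | box φ ihφ =>
      intro s
      have h1 := frag_box hφ
      simp only [KModel.sat, toNF, List.mem_singleton]
      constructor
      · intro h
        refine ⟨_, rfl, ?_⟩
        simp only [satNF, satD]
        refine ⟨by simp, trivial, fun _ t ht => ?_⟩
        rw [satSome_iff, toList_nfsOf]
        exact ((ihφ h1) t).1 (h t ht)
      · rintro ⟨θ, rfl, h⟩ t ht
        simp only [satNF, satD] at h
        have := h.2.2 (by trivial) t ht
        rw [satSome_iff, toList_nfsOf] at this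
        exact ((ihφ h1) t).2 this

end NFsec


/-! ### Tree models -/

section TreeSec

mutual
/-- Finite tree models; `closed = false` adds an extra edge to the dead point. -/
inductive Tr : Type where
  | node : List ℕ → Trs → Bool → Tr
inductive Trs : Type where
  | nil : Trs
  | cons : Tr → Trs → Trs
end

def Trs.toList : Trs → List Tr
  | .nil => []
  | .cons a l => a :: l.toList

def trsOf : List Tr → Trs
  | [] => .nil
  | a :: t => .cons a (trsOf t)

lemma toList_trsOf (l : List Tr) : (trsOf l).toList = l := by
  induction l with
  | nil => simp [trsOf, Trs.toList]
  | cons a t ih => simp [trsOf, Trs.toList, ih]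

def trVars : Tr → List ℕ
  | .node v _ _ => v

def trChildren : Tr → List Tr
  | .node _ d _ => d.toList

def trClosed : Tr → Bool
  | .node _ _ c => c

/-- The universal tree model. -/
def TM : KModel where
  W := Option Tr
  R := fun a b =>
    match a, b with
    | some t, some t' => t' ∈ trChildren t
    | some t, none => trClosed t = false
    | none, none => True
    | none, some _ => False
  V := fun p => {a | ∃ t, a = some t ∧ p ∈ trVars t}

lemma TM_R_some_some {t t' : Tr} : TM.R (some t) (some t') ↔ t' ∈ trChildren t := Iff.rfl
lemma TM_R_some_none {t : Tr} : TM.R (some t) none ↔ trClosed t = false := Iff.rfl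
lemma TM_R_none_none : TM.R none none := trivial
lemma TM_R_none_some {t : Tr} : ¬ TM.R none (some t) := fun h => h
lemma TM_V_iff {p : ℕ} {a : Option Tr} : a ∈ TM.V p ↔ ∃ t, a = some t ∧ p ∈ trVars t := Iff.rfl

lemma dead_none : Dead TM (show TM.W from none) := by
  intro χ
  induction χ with
  | var p =>
      intro _ h
      obtain ⟨t, ht, -⟩ := TM_V_iff.1 h
      exact absurd ht (by simp)
  | nvar p => intro h; exact absurd h.2 (by simp [MF.nvars])
  | top =>
      intro h
      have := h.1 (show Conn.top ∈ (MF.top).conns by simp [MF.conns])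
      simp [C4] at this
  | bot => intro _ h; exact h
  | and φ ψ ihφ ihψ => intro h hs; exact ihφ (frag_and h).1 hs.1
  | or φ ψ ihφ ihψ =>
      intro h hs
      rcases hs with hs | hs
      · exact ihφ (frag_or h).1 hs
      · exact ihψ (frag_or h).2 hs
  | dia φ ihφ =>
      intro h hs
      obtain ⟨t, ht, hsat⟩ := hs
      match t with
      | none => exact ihφ (frag_dia h) hsat
      | some t' => exact TM_R_none_some ht
  | box φ ihφ =>
      intro h hs
      exact ihφ (frag_box h) (hs none TM_R_none_none)

/-- Finite sets of minimal tree models for a normal form (`n` is a depth bound / fuel). -/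
def minT : ℕ → NF → List Tr
  | 0, _ => []
  | n+1, .mk v d b l =>
    match b with
    | true =>
      ((d.toList.map (fun a => l.toList.flatMap (fun a' => minT n (conj a a')))).sections).flatMap
        (fun ds => ((l.toList.flatMap (minT n)).sublists).map
          (fun bs => Tr.node v (trsOf (ds ++ bs)) true))
    | false =>
      ((d.toList.map (minT n)).sections).map (fun ds => Tr.node v (trsOf ds) false)

lemma forall2_mem_left {α β : Type*} {r : α → β → Prop} {s : List α} {l : List β}
    (h : List.Forall₂ r s l) : ∀ c ∈ s, ∃ a ∈ l, r c a := by
  induction h with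
  | nil => simp
  | cons hr _ ih =>
      intro c hc
      rcases List.mem_cons.1 hc with rfl | hc
      · exact ⟨_, by simp, hr⟩
      · obtain ⟨a, ha, hra⟩ := ih c (by simpa using hc)
        exact ⟨a, by simp [ha], hra⟩

lemma forall2_mem_right {α β : Type*} {r : α → β → Prop} {s : List α} {l : List β}
    (h : List.Forall₂ r s l) : ∀ a ∈ l, ∃ c ∈ s, r c a := by
  induction h with
  | nil => simp
  | cons hr _ ih =>
      intro a ha
      rcases List.mem_cons.1 ha with rfl | ha
      · exact ⟨_, by simp, hr⟩
      · obtain ⟨c, hc, hrc⟩ := ih a (by simpa using ha)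
        exact ⟨c, by simp [hc], hrc⟩

lemma exists_forall2 {α β : Type*} {P : β → α → Prop} :
    ∀ (D : List β), (∀ a ∈ D, ∃ c : α, P a c) → ∃ s : List α, List.Forall₂ (fun c a => P a c) s D := by
  intro D
  induction D with
  | nil => intro _; exact ⟨[], List.Forall₂.nil⟩
  | cons a t ih =>
      intro h
      obtain ⟨c, hc⟩ := h a (by simp)
      obtain ⟨s, hs⟩ := ih (fun a' ha' => h a' (by simp [ha']))
      exact ⟨c :: s, List.Forall₂.cons hc hs⟩

theorem minT_sat : ∀ (n : ℕ) (θ : NF), θ.depth ≤ n → ∀ m ∈ minT n θ, satNF TM (some m) θ := by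
  intro n
  induction n with
  | zero => intro θ hθ; exfalso; have := depth_pos θ; omega
  | succ n ih =>
      rintro ⟨v, d, b, l⟩ hθ m hm
      simp only [NF.depth] at hθ
      have hd : NFs.depthL d ≤ n := by omega
      have hl : NFs.depthL l ≤ n := by omega
      cases b with
      | false =>
          simp only [minT, List.mem_map] at hm
          obtain ⟨ds, hds, rfl⟩ := hm
          have hf : List.Forall₂ (fun c a => c ∈ minT n a) ds (d.toList) := by
            have := List.mem_sections.1 hds
            exact List.forall₂_map_right_iff.1 this
          refine cast (satNF.eq_1 ..).symm ?_
          refine ⟨?_, ?_, by simp⟩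
          · intro p hp
            exact TM_V_iff.2 ⟨_, rfl, by simpa [trVars] using hp⟩
          · refine (satD_iff _ _ _).2 ?_
            intro a ha
            obtain ⟨c, hc, hca⟩ := forall2_mem_right hf a ha
            refine ⟨some c, ?_, ?_⟩
            · exact TM_R_some_some.2 (by simpa [trChildren, toList_trsOf] using hc)
            · exact ih a (le_trans (depth_mem _ _ ha) hd) c hca
      | true =>
          simp only [minT, List.mem_flatMap, List.mem_map] at hm
          obtain ⟨ds, hds, bs, hbs, rfl⟩ := hm
          have hf : List.Forall₂
              (fun c a => c ∈ l.toList.flatMap (fun a' => minT n (conj a a'))) ds (d.toList) := by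
            have := List.mem_sections.1 hds
            exact List.forall₂_map_right_iff.1 this
          have hconj : ∀ a ∈ d.toList, ∀ a' ∈ l.toList, ∀ c ∈ minT n (conj a a'),
              satNF TM (some c) (conj a a') := by
            intro a ha a' ha' c hc
            refine ih (conj a a') ?_ c hc
            have h1 := depth_mem _ _ ha
            have h2 := depth_mem _ _ ha'
            have h3 := depth_conj a a'
            omega
          refine cast (satNF.eq_1 ..).symm ?_
          refine ⟨?_, ?_, ?_⟩
          · intro p hp
            exact TM_V_iff.2 ⟨_, rfl, by simpa [trVars] using hp⟩
          · refine (satD_iff _ _ _).2 ?_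
            intro a ha
            obtain ⟨c, hc, hca⟩ := forall2_mem_right hf a ha
            simp only [List.mem_flatMap] at hca
            obtain ⟨a', ha', hc'⟩ := hca
            refine ⟨some c, ?_, ?_⟩
            · refine TM_R_some_some.2 ?_
              simp [trChildren, toList_trsOf]
              exact Or.inl hc
            · exact ((conj_sat TM a a' (some c)).1 (hconj a ha a' ha' c hc')).1
          · intro _ t ht
            match t with
            | none => exact absurd ht (by simp [TM_R_some_none, trClosed])
            | some c =>
              have hc := TM_R_some_some.1 ht
              simp only [trChildren, toList_trsOf, List.mem_append] at hc
              refine (satSome_iff _ _ _).2 ?_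
              rcases hc with hc | hc
              · obtain ⟨a, ha, hca⟩ := forall2_mem_left hf c hc
                simp only [List.mem_flatMap] at hca
                obtain ⟨a', ha', hc'⟩ := hca
                exact ⟨a', ha', ((conj_sat TM a a' (some c)).1 (hconj a ha a' ha' c hc')).2⟩
              · have hc2 : c ∈ l.toList.flatMap (minT n) := (List.mem_sublists.1 hbs).mem hc
                simp only [List.mem_flatMap] at hc2
                obtain ⟨a', ha', hc'⟩ := hc2
                exact ⟨a', ha', ih a' (le_trans (depth_mem _ _ ha') hl) c hc'⟩

theorem minT_cover : ∀ (n : ℕ) (θ : NF), θ.depth ≤ n →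
    ∀ (N : KModel) (u : N.W), satNF N u θ → ∃ m ∈ minT n θ, SimW TM N (some m) u := by
  intro n
  induction n with
  | zero => intro θ hθ; exfalso; have := depth_pos θ; omega
  | succ n ih =>
      rintro ⟨v, d, b, l⟩ hθ N u hsat
      classical
      simp only [NF.depth] at hθ
      have hdn : NFs.depthL d ≤ n := by omega
      have hln : NFs.depthL l ≤ n := by omega
      simp only [satNF] at hsat
      obtain ⟨hv, hd, hb⟩ := hsat
      rw [satD_iff] at hd
      cases b with
      | false =>
          have hpick : ∀ a ∈ d.toList, ∃ c,
              c ∈ minT n a ∧ ∃ w, N.R u w ∧ SimW TM N (some c) w := by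
            intro a ha
            obtain ⟨w, hw, hwa⟩ := hd a ha
            obtain ⟨c, hc, hsim⟩ := ih a (le_trans (depth_mem _ _ ha) hdn) N w hwa
            exact ⟨c, hc, w, hw, hsim⟩
          obtain ⟨ds, hds⟩ := exists_forall2 _ hpick
          have hmem : ds ∈ (d.toList.map (minT n)).sections :=
            List.mem_sections.2 (List.forall₂_map_right_iff.2 (hds.imp (fun _ _ h => h.1)))
          refine ⟨Tr.node v (trsOf ds) false, by simp [minT]; exact ⟨ds, hmem, rfl⟩, ?_⟩
          apply simW_head
          · intro p hp
            obtain ⟨t, ht, hpt⟩ := TM_V_iff.1 hp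
            obtain rfl : Tr.node v (trsOf ds) false = t := Option.some_injective _ ht
            exact hv p (by simpa [trVars] using hpt)
          · intro u' hu'
            match u' with
            | none => exact Or.inr dead_none
            | some c =>
                have hc := TM_R_some_some.1 hu'
                simp only [trChildren, toList_trsOf] at hc
                obtain ⟨a, _, _, w, hw, hsim⟩ := forall2_mem_left hds c hc
                exact Or.inl ⟨w, hw, hsim⟩
          · intro v' _
            refine Or.inl ⟨none, ?_, dead_simW dead_none v'⟩
            exact TM_R_some_none.2 (by simp [trClosed])
      | true =>
          have hbox : ∀ t, N.R u t → ∃ a' ∈ l.toList, satNF N t a' := by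
            intro t ht
            have := hb (by trivial) t ht
            rwa [satSome_iff] at this
          -- diamond witnesses
          have hpick : ∀ a ∈ d.toList, ∃ c,
              c ∈ l.toList.flatMap (fun a' => minT n (conj a a')) ∧
              ∃ w, N.R u w ∧ SimW TM N (some c) w := by
            intro a ha
            obtain ⟨w, hw, hwa⟩ := hd a ha
            obtain ⟨a', ha', hwa'⟩ := hbox w hw
            have hcj : satNF N w (conj a a') := (conj_sat N a a' w).2 ⟨hwa, hwa'⟩
            have hdep : (conj a a').depth ≤ n := by
              have h1 := depth_mem _ _ ha
              have h2 := depth_mem _ _ ha'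
              have h3 := depth_conj a a'
              omega
            obtain ⟨c, hc, hsim⟩ := ih (conj a a') hdep N w hcj
            exact ⟨c, List.mem_flatMap.2 ⟨a', ha', hc⟩, w, hw, hsim⟩
          obtain ⟨ds, hds⟩ := exists_forall2 _ hpick
          have hmem : ds ∈ (d.toList.map
              (fun a => l.toList.flatMap (fun a' => minT n (conj a a')))).sections :=
            List.mem_sections.2 (List.forall₂_map_right_iff.2 (hds.imp (fun _ _ h => h.1)))
          -- back witnesses
          have hback : ∀ t, N.R u t → ∃ c,
              c ∈ l.toList.flatMap (minT n) ∧ SimW TM N (some c) t := by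
            intro t ht
            obtain ⟨a', ha', hta'⟩ := hbox t ht
            obtain ⟨c, hc, hsim⟩ := ih a' (le_trans (depth_mem _ _ ha') hln) N t hta'
            exact ⟨c, List.mem_flatMap.2 ⟨a', ha', hc⟩, hsim⟩
          set pool := l.toList.flatMap (minT n) with hpool
          let g : ∀ t, N.R u t → Tr := fun t ht => Classical.choose (hback t ht)
          have hg : ∀ t (ht : N.R u t), g t ht ∈ pool ∧ SimW TM N (some (g t ht)) t :=
            fun t ht => Classical.choose_spec (hback t ht)
          let S : Tr → Prop := fun c => ∃ t, ∃ ht : N.R u t, g t ht = c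
          let bs := pool.filter (fun c => decide (S c))
          have hbs : bs ∈ pool.sublists := List.mem_sublists.2 List.filter_sublist
          have hbs_mem : ∀ c, c ∈ bs ↔ (c ∈ pool ∧ S c) := by
            intro c
            simp [bs, List.mem_filter]
          refine ⟨Tr.node v (trsOf (ds ++ bs)) true, ?_, ?_⟩
          · simp only [minT, List.mem_flatMap, List.mem_map]
            exact ⟨ds, hmem, bs, hbs, rfl⟩
          apply simW_head
          · intro p hp
            obtain ⟨t, ht, hpt⟩ := TM_V_iff.1 hp
            obtain rfl : Tr.node v (trsOf (ds ++ bs)) true = t := Option.some_injective _ ht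
            exact hv p (by simpa [trVars] using hpt)
          · intro u' hu'
            match u' with
            | none => exact absurd hu' (by simp [TM_R_some_none, trClosed])
            | some c =>
                have hc := TM_R_some_some.1 hu'
                simp only [trChildren, toList_trsOf, List.mem_append] at hc
                rcases hc with hc | hc
                · obtain ⟨a, _, _, w, hw, hsim⟩ := forall2_mem_left hds c hc
                  exact Or.inl ⟨w, hw, hsim⟩
                · obtain ⟨-, t, ht, rfl⟩ := (hbs_mem c).1 hc
                  exact Or.inl ⟨t, ht, (hg t ht).2⟩
          · intro t ht
            refine Or.inl ⟨some (g t ht), ?_, (hg t ht).2⟩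
            refine TM_R_some_some.2 ?_
            simp only [trChildren, toList_trsOf, List.mem_append]
            exact Or.inr ((hbs_mem _).2 ⟨(hg t ht).1, ⟨t, ht, rfl⟩⟩)

end TreeSec


/-! ### Finite generated submodels of `TM` -/

section RestrictSec

mutual
def subs : Tr → List Tr
  | .node v d c => .node v d c :: subsL d
def subsL : Trs → List Tr
  | .nil => []
  | .cons a t => subs a ++ subsL t
end

lemma self_mem_subs (t : Tr) : t ∈ subs t := by
  obtain ⟨v, d, c⟩ := t; simp [subs]

lemma mem_subsL : ∀ (d : Trs) (a : Tr), a ∈ d.toList → a ∈ subsL d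
  | .nil, a, h => by simp [Trs.toList] at h
  | .cons b t, a, h => by
      simp only [Trs.toList, List.mem_cons] at h
      rcases h with rfl | h
      · simp [subsL, self_mem_subs]
      · simp [subsL, mem_subsL t a h]

mutual
theorem subs_closed : ∀ (t s : Tr), s ∈ subs t → ∀ s' ∈ trChildren s, s' ∈ subs t
  | .node v d c, s, hs, s', hs' => by
      simp only [subs, List.mem_cons] at hs
      rcases hs with rfl | hs
      · simp only [trChildren] at hs'
        simp [subs, mem_subsL d s' hs']
      · simp [subs, subsL_closed d s hs s' hs']
theorem subsL_closed : ∀ (d : Trs) (s : Tr), s ∈ subsL d → ∀ s' ∈ trChildren s, s' ∈ subsL d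
  | .cons a t, s, hs, s', hs' => by
      simp only [subsL, List.mem_append] at hs ⊢
      rcases hs with hs | hs
      · exact Or.inl (subs_closed a s hs s' hs')
      · exact Or.inr (subsL_closed t s hs s' hs')
  | .nil, s, hs, s', hs' => by simp [subsL] at hs
end

/-- Worlds of the generated submodel at `t`. -/
def restrictW (t : Tr) : Type := Option {s : Tr // s ∈ subs t}

def emb (t : Tr) : restrictW t → Option Tr
  | none => none
  | some s => some s.1

/-- The generated submodel of `TM` at `t`, a finite model. -/
def restrict (t : Tr) : KModel where
  W := restrictW t
  R := fun a b => TM.R (emb t a) (emb t b)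
  V := fun p => {a | emb t a ∈ TM.V p}

lemma finite_restrictW (t : Tr) : Finite (restrictW t) := by
  haveI : Finite {s : Tr // s ∈ subs t} := (List.finite_toSet (subs t)).to_subtype
  unfold restrictW
  exact Finite.of_equiv _ (Equiv.optionEquivSumPUnit.{0, 0} {s : Tr // s ∈ subs t}).symm

lemma emb_succ (t : Tr) (w : restrictW t) (y : Option Tr) (h : TM.R (emb t w) y) :
    ∃ w', (restrict t).R w w' ∧ emb t w' = y := by
  match w, y with
  | none, none => exact ⟨none, h, rfl⟩
  | none, some s => exact absurd h TM_R_none_some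
  | some s, none => exact ⟨none, h, rfl⟩
  | some ⟨s, hs⟩, some s' =>
      have hc : s' ∈ trChildren s := h
      exact ⟨some ⟨s', subs_closed t s hs s' hc⟩, h, rfl⟩

lemma restrict_sat (t : Tr) : ∀ (χ : MF) (w : restrictW t),
    (restrict t).sat w χ ↔ TM.sat (emb t w) χ := by
  intro χ
  induction χ with
  | var p => intro w; exact Iff.rfl
  | nvar p => intro w; exact Iff.rfl
  | top => intro w; exact Iff.rfl
  | bot => intro w; exact Iff.rfl
  | and φ ψ ihφ ihψ => intro w; exact and_congr (ihφ w) (ihψ w)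
  | or φ ψ ihφ ihψ => intro w; exact or_congr (ihφ w) (ihψ w)
  | dia φ ihφ =>
      intro w
      constructor
      · rintro ⟨w', hR, hs⟩
        exact ⟨emb t w', hR, (ihφ w').1 hs⟩
      · rintro ⟨y, hy, hs⟩
        obtain ⟨w', hR, rfl⟩ := emb_succ t w y hy
        exact ⟨w', hR, (ihφ w').2 hs⟩
  | box φ ihφ =>
      intro w
      constructor
      · intro h y hy
        obtain ⟨w', hR, rfl⟩ := emb_succ t w y hy
        exact (ihφ w').1 (h w' hR)
      · intro h w' hw'
        exact (ihφ w').2 (h (emb t w') hw')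

/-- The positive example models. -/
def pmOf (t : Tr) : PModel := ⟨restrict t, some ⟨t, self_mem_subs t⟩⟩

/-- The negative example models. -/
def pmOfD (t : Tr) : PModel := ⟨dualModel (restrict t), some ⟨t, self_mem_subs t⟩⟩

end RestrictSec

/-- Main theorem: The positive modal language `L⁺_{□,◇,∧,∨}` is finitely
characterizable: for every finite set `P` of propositional variables, every formula
`φ ∈ L⁺_{□,◇,∧,∨}[P]` has a finite characterization with respect to `L⁺_{□,◇,∧,∨}[P]`. -/
theorem posLang_finitely_characterizable
    (P : Set ℕ) (hfin : P.Finite) (φ : MF)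
    (hφ : inPosLang {Conn.box, Conn.dia, Conn.conj, Conn.disj} P φ) :
    ∃ Epos Eneg : Set PModel,
      FinChar {ψ : MF | inPosLang {Conn.box, Conn.dia, Conn.conj, Conn.disj} P ψ}
        φ Epos Eneg := by
  classical
  have hfr : Frag φ := ⟨hφ.1.1, hφ.2⟩
  have hfr' : Frag φ.flip := frag_flip hfr
  set EposL : List PModel := (toNF φ).flatMap (fun θ => (minT θ.depth θ).map pmOf) with hEposL
  set EnegL : List PModel :=
    (toNF φ.flip).flatMap (fun θ => (minT θ.depth θ).map pmOfD) with hEnegL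
  have hmemP : ∀ {θ m}, θ ∈ toNF φ → m ∈ minT θ.depth θ → pmOf m ∈ EposL := by
    intro θ m hθ hm
    rw [hEposL]
    exact List.mem_flatMap.2 ⟨θ, hθ, List.mem_map.2 ⟨m, hm, rfl⟩⟩
  have hmemN : ∀ {θ m}, θ ∈ toNF φ.flip → m ∈ minT θ.depth θ → pmOfD m ∈ EnegL := by
    intro θ m hθ hm
    rw [hEnegL]
    exact List.mem_flatMap.2 ⟨θ, hθ, List.mem_map.2 ⟨m, hm, rfl⟩⟩
  refine ⟨{e | e ∈ EposL}, {e | e ∈ EnegL}, EposL.finite_toSet, EnegL.finite_toSet,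
    ?_, ?_, ⟨?_, ?_⟩, ?_⟩
  · -- positive examples are finite models
    intro e he
    simp only [Set.mem_setOf_eq, hEposL, List.mem_flatMap, List.mem_map] at he
    obtain ⟨θ, hθ, m, hm, rfl⟩ := he
    exact finite_restrictW m
  · -- negative examples are finite models
    intro e he
    simp only [Set.mem_setOf_eq, hEnegL, List.mem_flatMap, List.mem_map] at he
    obtain ⟨θ, hθ, m, hm, rfl⟩ := he
    exact finite_restrictW m
  · -- φ holds on positive examples
    intro e he
    simp only [Set.mem_setOf_eq, hEposL, List.mem_flatMap, List.mem_map] at he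
    obtain ⟨θ, hθ, m, hm, rfl⟩ := he
    have hTM : TM.sat (some m) φ :=
      (toNF_sound φ hfr TM (some m)).2 ⟨θ, hθ, minT_sat θ.depth θ le_rfl m hm⟩
    exact (restrict_sat m φ (some ⟨m, self_mem_subs m⟩)).2 hTM
  · -- φ fails on negative examples
    intro e he
    simp only [Set.mem_setOf_eq, hEnegL, List.mem_flatMap, List.mem_map] at he
    obtain ⟨θ, hθ, m, hm, rfl⟩ := he
    have hTM : TM.sat (some m) φ.flip :=
      (toNF_sound φ.flip hfr' TM (some m)).2 ⟨θ, hθ, minT_sat θ.depth θ le_rfl m hm⟩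
    intro hc
    have hdual := (dual_sat (restrict m) φ (some ⟨m, self_mem_subs m⟩)).1 hc
    exact hdual ((restrict_sat m φ.flip (some ⟨m, self_mem_subs m⟩)).2 hTM)
  · -- any fitting ψ in the fragment is equivalent to φ
    intro ψ hψ hfits
    have hfψ : Frag ψ := ⟨hψ.1.1, hψ.2⟩
    intro e
    constructor
    · intro hsφ
      obtain ⟨θ, hθ, hsθ⟩ := (toNF_sound φ hfr e.M e.s).1 hsφ
      obtain ⟨m, hm, hsim⟩ := minT_cover θ.depth θ le_rfl e.M e.s hsθ
      have h1 : (pmOf m).sat ψ := hfits.1 (pmOf m) (hmemP hθ hm)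
      have h2 : TM.sat (some m) ψ := (restrict_sat m ψ (some ⟨m, self_mem_subs m⟩)).1 h1
      exact simW_preserve hsim hfψ h2
    · intro hsψ
      by_contra hnφ
      have hdual : (dualModel e.M).sat e.s φ.flip :=
        (dual_sat e.M φ.flip e.s).2 (by rwa [MF.flip_flip])
      obtain ⟨θ, hθ, hsθ⟩ := (toNF_sound φ.flip hfr' (dualModel e.M) e.s).1 hdual
      obtain ⟨m, hm, hsim⟩ := minT_cover θ.depth θ le_rfl (dualModel e.M) e.s hsθ
      have h1 : ¬ (pmOfD m).sat ψ := hfits.2 (pmOfD m) (hmemN hθ hm)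
      have h2 : (restrict m).sat (some ⟨m, self_mem_subs m⟩) ψ.flip := by
        by_contra hc
        exact h1 ((dual_sat (restrict m) ψ (some ⟨m, self_mem_subs m⟩)).2 hc)
      have h3 : TM.sat (some m) ψ.flip :=
        (restrict_sat m ψ.flip (some ⟨m, self_mem_subs m⟩)).1 h2
      have h4 : (dualModel e.M).sat e.s ψ.flip := simW_preserve hsim (frag_flip hfψ) h3
      have h5 := (dual_sat e.M ψ.flip e.s).1 h4
      rw [MF.flip_flip] at h5
      exact h5 hsψ
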